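/- arXiv:2210.16164 — 4 statements merged into one kernel-verified Lean document; each statement's English description precedes it below -/
import Mathlib

section
/- With notation as in the corona construction: for integers i < k ≤ 0, if J ∈ B_i^1 and K ∈ B_k^1, then J is not contained in K. Consequently the cubes in ⋃_{i ≤ 0} B_i^1 are pairwise disjoint. -/
noncomputable section

def dilCube {d : ℕ} (c : EuclideanSpace ℝ (Fin d)) (l r : ℝ) :
    Set (EuclideanSpace ℝ (Fin d)) := {y | ∀ n, |y n - c n| ≤ r * l / 2}

/-- The mollified distance `ρ_I(y) = inf {r > 1 : y ∈ (2r−1)I}`. -/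
def rho {d : ℕ} (c : EuclideanSpace ℝ (Fin d)) (l : ℝ) (y : EuclideanSpace ℝ (Fin d)) : ℝ :=
  sInf {r : ℝ | 1 < r ∧ y ∈ dilCube c l (2 * r - 1)}

def rhoSet {d : ℕ} (c : EuclideanSpace ℝ (Fin d)) (l : ℝ)
    (F : Set (EuclideanSpace ℝ (Fin d))) : ℝ :=
  sInf (rho c l '' F)

def dyadicCube {d : ℕ} (j : ℤ) (k : Fin d → ℤ) : Set (EuclideanSpace ℝ (Fin d)) :=
  {y | ∀ n, (2:ℝ)^j * k n ≤ y n ∧ y n < (2:ℝ)^j * (k n + 1)}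

def dyadicCenter {d : ℕ} (j : ℤ) (k : Fin d → ℤ) : EuclideanSpace ℝ (Fin d) :=
  WithLp.toLp 2 (fun n => (2:ℝ)^j * (k n + 1/2))

def rhoSetD {d : ℕ} (j : ℤ) (k : Fin d → ℤ) (F : Set (EuclideanSpace ℝ (Fin d))) : ℝ :=
  rhoSet (dyadicCenter j k) ((2:ℝ)^j) F

/-- `E_j^0`: the union of the stopping cubes at scale `j`. -/
def E0T {d : ℕ} (T0 : ℤ → Set (Fin d → ℤ)) (j : ℤ) : Set (EuclideanSpace ℝ (Fin d)) :=
  ⋃ k ∈ T0 j, dyadicCube j k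

/-- `T_j^c = {I ∈ 𝒟_j : ρ_I(E_j^0) ≤ c}` (index set), for `c ≥ 1`. -/
def Tlvl {d : ℕ} (T0 : ℤ → Set (Fin d → ℤ)) (j : ℤ) (c : ℕ) : Set (Fin d → ℤ) :=
  {k | rhoSetD j k (E0T T0 j) ≤ c}

/-- `B_j^k = T_j^{k+1} \ T_j^k` (index set). -/
def Blvl {d : ℕ} (T0 : ℤ → Set (Fin d → ℤ)) (j : ℤ) (c : ℕ) : Set (Fin d → ℤ) :=
  Tlvl T0 j (c+1) \ Tlvl T0 j c


namespace CoronaAux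

variable {d : ℕ}

lemma rhoAux_nonempty (c : EuclideanSpace ℝ (Fin d)) {l : ℝ} (hl : 0 < l)
    (y : EuclideanSpace ℝ (Fin d)) :
    {r : ℝ | 1 < r ∧ y ∈ dilCube c l (2 * r - 1)}.Nonempty := by
  set S := ∑ n, |y n - c n| with hS
  have hS0 : 0 ≤ S := Finset.sum_nonneg fun _ _ => abs_nonneg _
  have hSl : 0 ≤ S / l := div_nonneg hS0 hl.le
  refine ⟨2 + S / l, by linarith, fun n => ?_⟩
  have hn : |y n - c n| ≤ S :=
    Finset.single_le_sum (f := fun m => |y m - c m|) (fun i _ => abs_nonneg _) (Finset.mem_univ n)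
  have he : (2 * (2 + S / l) - 1) * l / 2 = 3 * l / 2 + S := by field_simp; ring
  rw [he]; linarith

lemma one_le_rho {c : EuclideanSpace ℝ (Fin d)} {l : ℝ} (hl : 0 < l)
    (y : EuclideanSpace ℝ (Fin d)) : 1 ≤ rho c l y :=
  le_csInf (rhoAux_nonempty c hl y) fun _ hr => hr.1.le

lemma rho_le {c y : EuclideanSpace ℝ (Fin d)} {l r : ℝ} (hr : 1 < r)
    (h : ∀ n, |y n - c n| ≤ (2 * r - 1) * l / 2) : rho c l y ≤ r :=
  csInf_le ⟨1, fun _ hs => hs.1.le⟩ ⟨hr, h⟩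

lemma rho_lt {c y : EuclideanSpace ℝ (Fin d)} {l r : ℝ} (hl : 0 < l)
    (h : rho c l y < r) : ∀ n, |y n - c n| < (2 * r - 1) * l / 2 := by
  obtain ⟨r', hr'S, hr'lt⟩ := exists_lt_of_csInf_lt (rhoAux_nonempty c hl y) h
  intro n
  calc |y n - c n| ≤ (2 * r' - 1) * l / 2 := hr'S.2 n
    _ < (2 * r - 1) * l / 2 := by nlinarith

lemma dyadic_eq_of_mem {j : ℤ} {a b : Fin d → ℤ} {x : EuclideanSpace ℝ (Fin d)}
    (ha : x ∈ dyadicCube j a) (hb : x ∈ dyadicCube j b) : a = b := by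
  funext n
  have h1 := ha n; have h2 := hb n
  have hp : (0:ℝ) < (2:ℝ)^j := by positivity
  have l1 : (a n : ℝ) < (b n : ℝ) + 1 := by
    have := (mul_lt_mul_iff_right₀ hp).1 (lt_of_le_of_lt h1.1 h2.2); exact this
  have l2 : (b n : ℝ) < (a n : ℝ) + 1 := by
    have := (mul_lt_mul_iff_right₀ hp).1 (lt_of_le_of_lt h2.1 h1.2); exact this
  have i1 : a n < b n + 1 := by exact_mod_cast l1
  have i2 : b n < a n + 1 := by exact_mod_cast l2
  omega

lemma dyadic_disjoint_of_ne {j : ℤ} {a b : Fin d → ℤ} (hab : a ≠ b) :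
    Disjoint (dyadicCube j a) (dyadicCube j b) :=
  Set.disjoint_left.2 fun _ hxa hxb => hab (dyadic_eq_of_mem hxa hxb)

lemma qpow_mul {i k : ℤ} (hik : i ≤ k) :
    (((2:ℤ) ^ (k - i).toNat : ℤ) : ℝ) * (2:ℝ)^i = (2:ℝ)^k := by
  push_cast
  rw [← zpow_natCast (2:ℝ) (k - i).toNat, ← zpow_add₀ (two_ne_zero)]
  congr 1
  omega

lemma dyadic_subset_up {i k : ℤ} (hik : i ≤ k) (a : Fin d → ℤ) :
    dyadicCube i a ⊆ dyadicCube k (fun n => a n / 2 ^ (k - i).toNat) := by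
  intro x hx n
  set q : ℤ := 2 ^ (k - i).toNat with hqdef
  have hq0 : (0:ℤ) < q := pow_pos two_pos _
  have hqR : (q:ℝ) * (2:ℝ)^i = (2:ℝ)^k := qpow_mul hik
  have hA : (0:ℝ) < (2:ℝ)^i := by positivity
  have e := Int.mul_ediv_add_emod (a n) q
  have hs0 : (0:ℤ) ≤ a n % q := Int.emod_nonneg _ hq0.ne'
  have hsq : a n % q < q := Int.emod_lt_of_pos _ hq0
  have eR : ((q:ℝ)) * ((a n / q : ℤ) : ℝ) + ((a n % q : ℤ) : ℝ) = (a n : ℝ) := by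
    exact_mod_cast congrArg (Int.cast : ℤ → ℝ) e
  have hs0R : (0:ℝ) ≤ ((a n % q : ℤ) : ℝ) := by exact_mod_cast hs0
  have hsqR : ((a n % q : ℤ) : ℝ) + 1 ≤ (q:ℝ) := by exact_mod_cast hsq
  have h1 := (hx n).1
  have h2 := (hx n).2
  have key : (2:ℝ)^i * ((q:ℝ) * ((a n / q : ℤ) : ℝ)) = (2:ℝ)^k * ((a n / q : ℤ) : ℝ) := by
    rw [← hqR]; ring
  constructor
  · show (2:ℝ)^k * ((a n / q : ℤ) : ℝ) ≤ x n
    nlinarith [mul_nonneg hA.le hs0R]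
  · show x n < (2:ℝ)^k * (((a n / q : ℤ) : ℝ) + 1)
    nlinarith [mul_le_mul_of_nonneg_left hsqR hA.le]

lemma corner_mem (j : ℤ) (a : Fin d → ℤ) :
    (WithLp.toLp 2 (fun n => (2:ℝ)^j * a n) : EuclideanSpace ℝ (Fin d)) ∈ dyadicCube j a := by
  intro n
  have hp : (0:ℝ) < (2:ℝ)^j := by positivity
  refine ⟨le_refl _, ?_⟩
  show (2:ℝ)^j * (a n : ℝ) < (2:ℝ)^j * ((a n : ℝ) + 1)
  nlinarith

end CoronaAux

set_option maxHeartbeats 2000000 in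
lemma not_subset_main {d : ℕ} (T0 : ℤ → Set (Fin d → ℤ))
    (hnest : ∀ i k : ℤ, i ≤ k → k ≤ 0 → E0T T0 i ⊆ E0T T0 k)
    {i k : ℤ} (hik : i < k) (hk0 : k ≤ 0) {kJ kK : Fin d → ℤ}
    (hJ : kJ ∈ Blvl T0 i 1) (hK : kK ∈ Blvl T0 k 1) :
    ¬ dyadicCube i kJ ⊆ dyadicCube k kK := by
  intro hsub
  have hA : (0:ℝ) < (2:ℝ)^i := by positivity
  have hB : (0:ℝ) < (2:ℝ)^k := by positivity
  have hAB : 2 * (2:ℝ)^i ≤ (2:ℝ)^k := by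
    have h : (2:ℝ)^(i+1) ≤ (2:ℝ)^k := zpow_le_zpow_right₀ one_le_two (by omega)
    rw [zpow_add_one₀ (two_ne_zero)] at h
    linarith
  obtain ⟨hJ2', hJ1'⟩ := hJ
  obtain ⟨hK2', hK1'⟩ := hK
  simp only [Tlvl, Set.mem_setOf_eq, not_le] at hJ2' hJ1' hK2' hK1'
  norm_num at hJ2' hJ1' hK2' hK1'
  -- hJ2' : rhoSetD i kJ (E0T T0 i) ≤ 2, hJ1' : 1 < rhoSetD i kJ (E0T T0 i), similarly hK
  have hEi : (E0T T0 i).Nonempty := by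
    rcases Set.eq_empty_or_nonempty (E0T T0 i) with h | h
    · rw [h] at hJ1'
      simp only [rhoSetD, rhoSet, Set.image_empty, Real.sInf_empty] at hJ1'
      norm_num at hJ1'
    · exact h
  set q : ℤ := 2 ^ (k - i).toNat with hqdef
  have hq0 : (0:ℤ) < q := pow_pos two_pos _
  have hqR : (q:ℝ) * (2:ℝ)^i = (2:ℝ)^k := CoronaAux.qpow_mul hik.le
  have hsubm := CoronaAux.dyadic_subset_up (d := d) hik.le kJ
  have hcorner := CoronaAux.corner_mem i kJ
  have heq : (fun n => kJ n / q) = kK :=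
    CoronaAux.dyadic_eq_of_mem (hsubm hcorner) (hsub hcorner)
  have hlowhigh : ∀ n, (q:ℝ) * kK n ≤ kJ n ∧ (kJ n : ℝ) ≤ q * kK n + q - 1 := by
    intro n
    have e := Int.mul_ediv_add_emod (kJ n) q
    have h0 : (0:ℤ) ≤ kJ n % q := Int.emod_nonneg _ hq0.ne'
    have hsq : kJ n % q < q := Int.emod_lt_of_pos _ hq0
    have hd : kJ n / q = kK n := congrFun heq n
    rw [hd] at e
    constructor
    · exact_mod_cast (by linarith : q * kK n ≤ kJ n)
    · exact_mod_cast (by linarith : kJ n ≤ q * kK n + q - 1)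
  have hlt : sInf (rho (dyadicCenter i kJ) ((2:ℝ)^i) '' (E0T T0 i)) < 5/2 :=
    lt_of_le_of_lt (hJ2' : rhoSetD i kJ (E0T T0 i) ≤ 2) (by norm_num)
  obtain ⟨v, ⟨x, hxEi, rfl⟩, hv⟩ := exists_lt_of_csInf_lt (hEi.image _) hlt
  have hxb := CoronaAux.rho_lt hA hv
  have hxb' : ∀ n, |x n - (2:ℝ)^i * ((kJ n : ℝ) + 1/2)| < 2 * (2:ℝ)^i := by
    intro n
    have h := hxb n
    rw [show (2 * (5/2:ℝ) - 1) * (2:ℝ)^i / 2 = 2 * (2:ℝ)^i by ring] at h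
    exact h
  have hxEk : x ∈ E0T T0 k := hnest i k hik.le hk0 hxEi
  obtain ⟨m, hmT, hxm⟩ : ∃ m ∈ T0 k, x ∈ dyadicCube k m := by
    simpa [E0T] using hxEk
  have hmb : ∀ n, kK n - 1 ≤ m n ∧ m n ≤ kK n + 1 := by
    intro n
    have h1 := (hxm n).1
    have h2 := (hxm n).2
    have habs := abs_lt.mp (hxb' n)
    have hL := (hlowhigh n).1
    have hH := (hlowhigh n).2
    have key : (2:ℝ)^i * ((q:ℝ) * (kK n : ℝ)) = (2:ℝ)^k * (kK n : ℝ) := by rw [← hqR]; ring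
    have keyq : (2:ℝ)^i * (q:ℝ) = (2:ℝ)^k := by rw [← hqR]; ring
    have r1 : (2:ℝ)^k * ((kK n :ℝ) - 1) < (2:ℝ)^k * ((m n : ℝ) + 1) := by
      nlinarith [mul_le_mul_of_nonneg_left hL hA.le]
    have r2 : (2:ℝ)^k * (m n : ℝ) < (2:ℝ)^k * ((kK n : ℝ) + 2) := by
      nlinarith [mul_le_mul_of_nonneg_left hH hA.le]
    have i1 : (kK n : ℝ) - 1 < (m n :ℝ) + 1 := (mul_lt_mul_iff_right₀ hB).1 r1
    have i2 : (m n : ℝ) < (kK n : ℝ) + 2 := (mul_lt_mul_iff_right₀ hB).1 r2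
    have i1' : kK n - 1 < m n + 1 := by exact_mod_cast i1
    have i2' : m n < kK n + 2 := by exact_mod_cast i2
    omega
  have hbdd : BddBelow (rho (dyadicCenter k kK) ((2:ℝ)^k) '' (E0T T0 k)) :=
    ⟨1, by rintro v ⟨y, -, rfl⟩; exact CoronaAux.one_le_rho hB y⟩
  have hne : (rho (dyadicCenter k kK) ((2:ℝ)^k) '' (E0T T0 k)).Nonempty :=
    ⟨_, ⟨x, hxEk, rfl⟩⟩
  have hfin : rhoSetD k kK (E0T T0 k) ≤ 1 := by
    show sInf (rho (dyadicCenter k kK) ((2:ℝ)^k) '' (E0T T0 k)) ≤ (1:ℝ)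
    rw [Real.sInf_le_iff hbdd hne]
    intro ε hε
    set t := min ε 1 with htdef
    have ht0 : 0 < t := lt_min hε one_pos
    have ht1 : t ≤ 1 := min_le_right _ _
    have htε : t ≤ ε := min_le_left _ _
    set y : EuclideanSpace ℝ (Fin d) := WithLp.toLp 2 (fun n =>
      (1 - t) * ((2:ℝ)^k * ((max (kK n) (m n) : ℤ) : ℝ))
        + t * ((2:ℝ)^k * ((m n : ℝ) + 1/2))) with hydef
    have hyK : y ∈ dyadicCube k m := by
      intro n
      have hb1 : (m n : ℝ) ≤ ((max (kK n) (m n) : ℤ) : ℝ) := by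
        exact_mod_cast le_max_right (kK n) (m n)
      have hb2 : ((max (kK n) (m n) : ℤ) : ℝ) ≤ (m n : ℝ) + 1 := by
        have h2 := (hmb n).1
        have : max (kK n) (m n) ≤ m n + 1 := max_le (by omega) (by omega)
        exact_mod_cast this
      constructor
      · show (2:ℝ)^k * (m n : ℝ) ≤ (1 - t) * ((2:ℝ)^k * ((max (kK n) (m n) : ℤ) : ℝ))
            + t * ((2:ℝ)^k * ((m n : ℝ) + 1/2))
        nlinarith [mul_nonneg (mul_nonneg (by linarith : (0:ℝ) ≤ 1 - t) hB.le)
          (by linarith : (0:ℝ) ≤ ((max (kK n) (m n) : ℤ) : ℝ) - (m n : ℝ)), mul_pos ht0 hB]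
      · show (1 - t) * ((2:ℝ)^k * ((max (kK n) (m n) : ℤ) : ℝ))
            + t * ((2:ℝ)^k * ((m n : ℝ) + 1/2)) < (2:ℝ)^k * ((m n : ℝ) + 1)
        nlinarith [mul_nonneg (mul_nonneg (by linarith : (0:ℝ) ≤ 1 - t) hB.le)
          (by linarith : (0:ℝ) ≤ (m n : ℝ) + 1 - ((max (kK n) (m n) : ℤ) : ℝ)), mul_pos ht0 hB]
    have hrho : rho (dyadicCenter k kK) ((2:ℝ)^k) y ≤ 1 + t/2 := by
      apply CoronaAux.rho_le (by linarith)
      intro n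
      have hM1 : (kK n : ℝ) ≤ ((max (kK n) (m n) : ℤ) : ℝ) := by
        exact_mod_cast le_max_left (kK n) (m n)
      have hM2 : ((max (kK n) (m n) : ℤ) : ℝ) ≤ (kK n : ℝ) + 1 := by
        have h2 := (hmb n).2
        have : max (kK n) (m n) ≤ kK n + 1 := max_le (by omega) (by omega)
        exact_mod_cast this
      have hm1 : (kK n : ℝ) - 1 ≤ (m n : ℝ) := by
        have := (hmb n).1; exact_mod_cast this
      have hm2 : (m n : ℝ) ≤ (kK n : ℝ) + 1 := by
        have := (hmb n).2; exact_mod_cast this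
      have hdec : y n - dyadicCenter k kK n =
          (1 - t) * ((2:ℝ)^k * (((max (kK n) (m n) : ℤ) : ℝ) - ((kK n : ℝ) + 1/2)))
            + t * ((2:ℝ)^k * ((m n : ℝ) - (kK n : ℝ))) := by
        show (1 - t) * ((2:ℝ)^k * ((max (kK n) (m n) : ℤ) : ℝ))
            + t * ((2:ℝ)^k * ((m n : ℝ) + 1/2)) - (2:ℝ)^k * ((kK n : ℝ) + 1/2) = _
        ring
      rw [abs_le, hdec]
      have p1 : (0:ℝ) ≤ (1 - t) * (2:ℝ)^k := mul_nonneg (by linarith) hB.le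
      have p2 : (0:ℝ) ≤ t * (2:ℝ)^k := mul_nonneg ht0.le hB.le
      constructor
      · nlinarith [mul_le_mul_of_nonneg_left
            (by linarith : -(1/2:ℝ) ≤ ((max (kK n) (m n) : ℤ) : ℝ) - ((kK n : ℝ) + 1/2)) p1,
          mul_le_mul_of_nonneg_left (by linarith : (-1:ℝ) ≤ (m n : ℝ) - (kK n : ℝ)) p2]
      · nlinarith [mul_le_mul_of_nonneg_left
            (by linarith : ((max (kK n) (m n) : ℤ) : ℝ) - ((kK n : ℝ) + 1/2) ≤ 1/2) p1,
          mul_le_mul_of_nonneg_left (by linarith : (m n : ℝ) - (kK n : ℝ) ≤ 1) p2]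
    refine ⟨rho (dyadicCenter k kK) ((2:ℝ)^k) y,
      ⟨y, Set.mem_biUnion hmT hyK, rfl⟩, by linarith⟩
  linarith [hK1', hfin]

/-- Cross-scale disjointness of the corona boundary cubes: if `i < k ≤ 0`,
`J ∈ B_i^1` and `K ∈ B_k^1`, then `J ⊄ K`; consequently all cubes in
`⋃_{i ≤ 0} B_i^1` are pairwise disjoint. -/
theorem B1_pairwise_disjoint (d : ℕ) (hd : 1 ≤ d) (T0 : ℤ → Set (Fin d → ℤ))
    (hfin : ∀ j : ℤ, (T0 j).Finite)
    (hnest : ∀ i k : ℤ, i ≤ k → k ≤ 0 → E0T T0 i ⊆ E0T T0 k) :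
    (∀ i k : ℤ, i < k → k ≤ 0 → ∀ kJ ∈ Blvl T0 i 1, ∀ kK ∈ Blvl T0 k 1,
        ¬ dyadicCube i kJ ⊆ dyadicCube k kK)
    ∧ (∀ i ≤ (0:ℤ), ∀ k ≤ (0:ℤ), ∀ kJ ∈ Blvl T0 i 1, ∀ kK ∈ Blvl T0 k 1,
        (i, kJ) ≠ (k, kK) → Disjoint (dyadicCube i kJ) (dyadicCube k kK)) := by
  refine ⟨fun i k hik hk0 kJ hJ kK hK => not_subset_main T0 hnest hik hk0 hJ hK, ?_⟩
  have hdisj : ∀ i k : ℤ, i < k → k ≤ 0 → ∀ kJ ∈ Blvl T0 i 1, ∀ kK ∈ Blvl T0 k 1,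
      Disjoint (dyadicCube i kJ) (dyadicCube k kK) := by
    intro i k hik hk0 kJ hJ kK hK
    have hsubm := CoronaAux.dyadic_subset_up (d := d) hik.le kJ
    by_cases hm : (fun n => kJ n / 2 ^ (k - i).toNat) = kK
    · exact absurd (hm ▸ hsubm) (not_subset_main T0 hnest hik hk0 hJ hK)
    · exact (CoronaAux.dyadic_disjoint_of_ne hm).mono_left hsubm
  intro i hi k hk kJ hJ kK hK hne
  rcases lt_trichotomy i k with h | h | h
  · exact hdisj i k h hk kJ hJ kK hK
  · subst h
    have hne' : kJ ≠ kK := fun hc => hne (by rw [hc])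
    exact CoronaAux.dyadic_disjoint_of_ne hne'
  · exact (hdisj k i h hi kK hK kJ hJ).symm
end
end

section
/- Triangle-type inequality for the mollified distance: let K and K' be axis-parallel cubes of the same side length. Then for every x ∈ ℝ^d, ρ_{K'}(x) ≤ C ρ_K(x) · ρ_K(K'), where ρ_K(K') = inf_{y ∈ K'} ρ_K(y) and C is a constant depending only on the dimension d. -/
noncomputable section

/-- The closed axis-parallel cube with center `c` and side length `l`. -/
def cube {d : ℕ} (c : EuclideanSpace ℝ (Fin d)) (l : ℝ) : Set (EuclideanSpace ℝ (Fin d)) :=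
  dilCube c l 1

lemma sInf_one_max (a : ℝ) : sInf {r : ℝ | 1 < r ∧ a ≤ r} = max 1 a := by
  rcases le_or_gt a 1 with h | h
  · have hs : {r : ℝ | 1 < r ∧ a ≤ r} = Set.Ioi 1 := by
      ext r
      simp only [Set.mem_setOf_eq, Set.mem_Ioi]
      exact ⟨fun h => h.1, fun hr => ⟨hr, h.trans hr.le⟩⟩
    rw [hs, csInf_Ioi, max_eq_left h]
  · have hs : {r : ℝ | 1 < r ∧ a ≤ r} = Set.Ici a := by
      ext r
      simp only [Set.mem_setOf_eq, Set.mem_Ici]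
      exact ⟨fun h => h.2, fun hr => ⟨h.trans_le hr, hr⟩⟩
    rw [hs, csInf_Ici, max_eq_right h.le]

lemma rho_eq {d : ℕ} [Nonempty (Fin d)] (c : EuclideanSpace ℝ (Fin d)) {l : ℝ} (hl : 0 < l)
    (x : EuclideanSpace ℝ (Fin d)) :
    rho c l x
      = max 1 (Finset.univ.sup' Finset.univ_nonempty (fun n => |x n - c n|) / l + 1/2) := by
  set M := Finset.univ.sup' Finset.univ_nonempty (fun n => |x n - c n|) with hM
  have key : ∀ r : ℝ, (x ∈ dilCube c l (2 * r - 1)) ↔ M / l + 1/2 ≤ r := by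
    intro r
    have h1 : (x ∈ dilCube c l (2 * r - 1)) ↔ M ≤ (2 * r - 1) * l / 2 := by
      simp only [dilCube, Set.mem_setOf_eq, hM, Finset.sup'_le_iff, Finset.mem_univ,
        true_implies]
    rw [h1, show (2 * r - 1) * l / 2 = (r - 1/2) * l by ring, ← div_le_iff₀ hl]
    constructor <;> intro h <;> linarith
  have hs : {r : ℝ | 1 < r ∧ x ∈ dilCube c l (2 * r - 1)}
      = {r : ℝ | 1 < r ∧ M / l + 1/2 ≤ r} := by
    ext r; simp only [Set.mem_setOf_eq, key]
  rw [rho, hs, sInf_one_max]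

/-- Quasi-triangle inequality for the mollified distance: for cubes `K`, `K'`
of equal side length, `ρ_{K'}(x) ≤ C ρ_K(x) ρ_K(K')` with `C = C(d)`. -/
theorem rho_triangle (d : ℕ) (hd : 1 ≤ d) :
    ∃ C > (0:ℝ), ∀ (c c' : EuclideanSpace ℝ (Fin d)) (l : ℝ), 0 < l →
      ∀ x : EuclideanSpace ℝ (Fin d),
        rho c' l x ≤ C * rho c l x * rhoSet c l (cube c' l) := by
  haveI : Nonempty (Fin d) := ⟨⟨0, hd⟩⟩
  refine ⟨2, by norm_num, fun c c' l hl x => ?_⟩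
  set M := Finset.univ.sup' Finset.univ_nonempty (fun n => |x n - c n|) with hM
  set M' := Finset.univ.sup' Finset.univ_nonempty (fun n => |x n - c' n|) with hM'
  set D := Finset.univ.sup' Finset.univ_nonempty (fun n => |c' n - c n|) with hD
  have hM0 : 0 ≤ M := by
    rw [hM]
    exact le_trans (abs_nonneg _)
      (Finset.le_sup' (fun n => |x n - c n|) (Finset.mem_univ (Classical.arbitrary (Fin d))))
  have hD0 : 0 ≤ D := by
    rw [hD]
    exact le_trans (abs_nonneg _)
      (Finset.le_sup' (fun n => |c' n - c n|) (Finset.mem_univ (Classical.arbitrary (Fin d))))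
  -- M' ≤ M + D
  have hM'le : M' ≤ M + D := by
    apply Finset.sup'_le
    intro n _
    calc |x n - c' n| ≤ |x n - c n| + |c' n - c n| := by
          have := abs_sub_abs_le_abs_sub (x n - c n) (x n - c' n)
          have h2 : |x n - c' n| ≤ |x n - c n| + |(x n - c n) - (x n - c' n)| := by
            have := abs_sub (x n - c n) ((x n - c n) - (x n - c' n))
            calc |x n - c' n| = |(x n - c n) - ((x n - c n) - (x n - c' n))| := by ring_nf
              _ ≤ |x n - c n| + |(x n - c n) - (x n - c' n)| := abs_sub _ _
          calc |x n - c' n| ≤ |x n - c n| + |(x n - c n) - (x n - c' n)| := h2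
            _ = |x n - c n| + |c' n - c n| := by rw [show (x n - c n) - (x n - c' n) = c' n - c n by ring]
      _ ≤ M + D := add_le_add
            (Finset.le_sup' (fun n => |x n - c n|) (Finset.mem_univ n))
            (Finset.le_sup' (fun n => |c' n - c n|) (Finset.mem_univ n))
  set A := max 1 (M / l + 1/2) with hA
  set B := max 1 (D / l) with hB
  have hA1 : (1:ℝ) ≤ A := le_max_left _ _
  have hB1 : (1:ℝ) ≤ B := le_max_left _ _
  have hAa : M / l + 1/2 ≤ A := le_max_right _ _
  have hBb : D / l ≤ B := le_max_right _ _
  -- lower bound for rhoSet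
  have hset : B ≤ rhoSet c l (cube c' l) := by
    apply le_csInf
    · exact ⟨rho c l c', ⟨c', fun n => by
        simp only [sub_self, abs_zero]; positivity, rfl⟩⟩
    · rintro _ ⟨y, hy, rfl⟩
      rw [rho_eq c hl y]
      set My := Finset.univ.sup' Finset.univ_nonempty (fun n => |y n - c n|) with hMy
      have hDle : D ≤ My + l / 2 := by
        apply Finset.sup'_le
        intro n _
        have h1 : |y n - c' n| ≤ 1 * l / 2 := hy n
        have h2 : |y n - c n| ≤ My := Finset.le_sup' (fun n => |y n - c n|) (Finset.mem_univ n)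
        have h3 : |c' n - c n| ≤ |y n - c n| + |y n - c' n| := by
          calc |c' n - c n| = |(y n - c n) - (y n - c' n)| := by ring_nf
            _ ≤ |y n - c n| + |y n - c' n| := abs_sub _ _
        linarith
      have hdiv : D / l ≤ My / l + 1/2 := by
        rw [div_add' _ _ _ hl.ne', div_le_div_iff₀ hl hl]
        nlinarith
      exact max_le_max le_rfl hdiv
  have hrho : rho c l x = A := rho_eq c hl x
  have hrho' : rho c' l x = max 1 (M' / l + 1/2) := rho_eq c' hl x
  have hstep : max 1 (M' / l + 1/2) ≤ 2 * A * B := by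
    apply max_le
    · nlinarith
    · have hdivM : M' / l ≤ M / l + D / l := by
        rw [← add_div]
        gcongr
      nlinarith
  calc rho c' l x = max 1 (M' / l + 1/2) := hrho'
    _ ≤ 2 * A * B := hstep
    _ ≤ 2 * A * rhoSet c l (cube c' l) := by
        apply mul_le_mul_of_nonneg_left hset
        nlinarith
    _ = 2 * rho c l x * rhoSet c l (cube c' l) := by rw [hrho]
end
end

section
/- Antiderivative in Fourier: let ψ be a Schwartz function on ℝ^d whose Fourier transform ψ̂ vanishes outside the cone {ξ : 2d·ξ_n² > |ξ|²} and outside the annulus {2^{−j} ≤ |ξ| ≤ 2^{2−j}}. Then there exists a Schwartz function θ with ∂_n^{d+1} θ = ψ, and θ̂ has the same support as ψ̂; in particular θ̂(ξ) = 0 unless 2^{−j} ≤ |ξ| ≤ 2^{2−j}. -/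
open scoped FourierTransform Manifold
open MeasureTheory Complex SchwartzMap Set Real
open scoped ContDiff

noncomputable section

lemma myTemperate {E : Type*} [NormedAddCommGroup E] [NormedSpace ℝ E]
    {g : E → ℂ} (hg : ContDiff ℝ ∞ g) (h : HasCompactSupport g) :
    Function.HasTemperateGrowth g := by
  refine ⟨hg, fun N => ?_⟩
  obtain ⟨C, hC⟩ := (h.iteratedFDeriv N).exists_bound_of_continuous
    (hg.continuous_iteratedFDeriv (m := N) (by exact_mod_cast le_top))
  exact ⟨0, C, fun x => by simpa using hC x⟩

def SchwartzMap.pderivCLM (𝕜 : Type*) [RCLike 𝕜] {E F : Type*} [NormedAddCommGroup E]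
    [NormedSpace ℝ E] [NormedAddCommGroup F] [NormedSpace ℝ F] [NormedSpace 𝕜 F]
    [SMulCommClass ℝ 𝕜 F] (m : E) : 𝓢(E, F) →L[𝕜] 𝓢(E, F) :=
  LineDeriv.lineDerivOpCLM 𝕜 𝓢(E, F) m

theorem SchwartzMap.pderivCLM_apply (𝕜 : Type*) [RCLike 𝕜] {E F : Type*} [NormedAddCommGroup E]
    [NormedSpace ℝ E] [NormedAddCommGroup F] [NormedSpace ℝ F] [NormedSpace 𝕜 F]
    [SMulCommClass ℝ 𝕜 F] (m : E) (f : 𝓢(E, F)) (x : E) :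
    SchwartzMap.pderivCLM 𝕜 m f x = fderiv ℝ f x m := rfl

lemma myFourierPDeriv {E : Type*} [NormedAddCommGroup E] [InnerProductSpace ℝ E]
    [FiniteDimensional ℝ E] [MeasurableSpace E] [BorelSpace E]
    (f : 𝓢(E, ℂ)) (e : E) (ξ : E) :
    𝓕 (⇑(SchwartzMap.pderivCLM ℝ e f)) ξ
      = (2 * π * Complex.I * ((inner ℝ ξ e : ℝ) : ℂ)) * 𝓕 (⇑f) ξ := by
  have hder : Integrable (fun x ↦ fderiv ℝ (⇑f) x) volume := by
    exact (SchwartzMap.fderivCLM ℝ E ℂ f).integrable (μ := volume)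
  have h1 : 𝓕 (⇑(pderivCLM ℝ e f)) ξ = 𝓕 (fderiv ℝ ⇑f) ξ e := by
    rw [Real.fourier_continuousLinearMap_apply hder]
    rfl
  rw [h1, Real.fourier_fderiv f.integrable f.differentiable hder]
  simp [VectorFourier.fourierSMulRight_apply, real_inner_comm, smul_smul, smul_eq_mul]
  rw [innerSL_apply_apply ℝ, real_inner_comm e ξ]
  ring


/-- The `n`-th partial derivative operator on functions `ℝ^d → ℂ`. -/
def partialDeriv {d : ℕ} (n : Fin d) (f : EuclideanSpace ℝ (Fin d) → ℂ)
    (x : EuclideanSpace ℝ (Fin d)) : ℂ :=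
  fderiv ℝ f x (EuclideanSpace.single n 1)

/-- Antiderivative in Fourier: if `ψ` is Schwartz with `ψ̂` supported in the cone
`{2d ξ_n² > |ξ|²}` and in the annulus `{2^{−j} ≤ |ξ| ≤ 2^{2−j}}`, then there is a
Schwartz function `θ` with `∂_n^{d+1} θ = ψ` and `supp θ̂ = supp ψ̂`; in particular
`θ̂(ξ) = 0` unless `2^{−j} ≤ |ξ| ≤ 2^{2−j}`. -/
theorem fourier_antiderivative (d : ℕ) (hd : 1 ≤ d) (n : Fin d) (j : ℤ)
    (ψ : SchwartzMap (EuclideanSpace ℝ (Fin d)) ℂ)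
    (hsupp : ∀ ξ : EuclideanSpace ℝ (Fin d),
      (2 * d * (ξ n) ^ 2 ≤ ‖ξ‖ ^ 2 ∨ ‖ξ‖ < (2:ℝ) ^ (-j) ∨ (2:ℝ) ^ (2 - j) < ‖ξ‖) →
      𝓕 (⇑ψ) ξ = 0) :
    ∃ θ : SchwartzMap (EuclideanSpace ℝ (Fin d)) ℂ,
      (partialDeriv n)^[d + 1] ⇑θ = ⇑ψ ∧
      Function.support (𝓕 (⇑θ)) = Function.support (𝓕 (⇑ψ)) ∧
      (∀ ξ : EuclideanSpace ℝ (Fin d),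
        (‖ξ‖ < (2:ℝ) ^ (-j) ∨ (2:ℝ) ^ (2 - j) < ‖ξ‖) → 𝓕 (⇑θ) ξ = 0) := by
  classical
  have hd1 : (1:ℝ) ≤ (d:ℝ) := by exact_mod_cast hd
  have hrpos : (0:ℝ) < (2:ℝ) ^ (-j) := by positivity
  -- closed sets for the cutoff function
  set T : Set (EuclideanSpace ℝ (Fin d)) :=
    {ξ | ‖ξ‖^2 ≤ 2*(d:ℝ)*(ξ n)^2 ∧ (2:ℝ)^(-j) ≤ ‖ξ‖ ∧ ‖ξ‖ ≤ (2:ℝ)^(2-j)} with hTdef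
  set S : Set (EuclideanSpace ℝ (Fin d)) :=
    {ξ | (ξ n)^2 ≤ ((2:ℝ)^(-j))^2/(4*(d:ℝ))} ∪ {ξ | (2:ℝ)^(3-j) ≤ ‖ξ‖} with hSdef
  have hprojc : Continuous (fun ξ : EuclideanSpace ℝ (Fin d) => ξ n) := by
    exact (EuclideanSpace.proj (𝕜 := ℝ) n).continuous
  have hT : IsClosed T := by
    have : T = {ξ : EuclideanSpace ℝ (Fin d) | ‖ξ‖^2 ≤ 2*(d:ℝ)*(ξ n)^2} ∩
        ({ξ | (2:ℝ)^(-j) ≤ ‖ξ‖} ∩ {ξ | ‖ξ‖ ≤ (2:ℝ)^(2-j)}) := rfl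
    rw [this]
    exact (isClosed_le (by fun_prop) (by fun_prop)).inter
      ((isClosed_le continuous_const (by fun_prop)).inter
        (isClosed_le (by fun_prop) continuous_const))
  have hS : IsClosed S :=
    (isClosed_le (by fun_prop) continuous_const).union
      (isClosed_le continuous_const (by fun_prop))
  have hdisj : Disjoint S T := by
    rw [Set.disjoint_left]
    rintro ξ (h1 | h2) ⟨ha, hb, hc⟩
    · simp only [mem_setOf_eq] at h1
      have hd4 : (0:ℝ) < 4*(d:ℝ) := by linarith
      have h1' : (ξ n)^2 * (4*(d:ℝ)) ≤ ((2:ℝ)^(-j))^2 := (le_div_iff₀ hd4).mp h1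
      nlinarith [mul_le_mul hb hb (le_of_lt hrpos) (norm_nonneg ξ), ha, h1', hrpos]
    · simp only [mem_setOf_eq] at h2
      have : (2:ℝ)^(2-j) < (2:ℝ)^(3-j) := by
        apply zpow_lt_zpow_right₀ one_lt_two; omega
      linarith
  obtain ⟨χ, hχ0, hχ1, hχmem⟩ :=
    exists_contMDiffMap_zero_one_of_isClosed (𝓘(ℝ, EuclideanSpace ℝ (Fin d))) (n := (⊤ : ℕ∞)) hS hT hdisj
  have hχ : ContDiff ℝ ∞ ⇑χ := by
    have := χ.contMDiff
    rwa [contMDiff_iff_contDiff] at this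
  -- the multiplier
  set g : EuclideanSpace ℝ (Fin d) → ℂ :=
    fun ξ => (χ ξ : ℂ) * ((2*(π:ℂ)*Complex.I*((ξ n : ℝ) : ℂ))^(d+1))⁻¹ with hgdef
  have hne : ∀ {y : ℝ}, y ≠ 0 → (2*(π:ℂ)*Complex.I*((y:ℝ):ℂ))^(d+1) ≠ 0 := by
    intro y hy
    apply pow_ne_zero
    refine mul_ne_zero (mul_ne_zero (mul_ne_zero two_ne_zero ?_) Complex.I_ne_zero) ?_
    · exact_mod_cast Real.pi_ne_zero
    · exact_mod_cast hy
  have hU : IsOpen {ξ : EuclideanSpace ℝ (Fin d) | (ξ n)^2 < ((2:ℝ)^(-j))^2/(4*(d:ℝ))} :=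
    isOpen_lt (by fun_prop) continuous_const
  have hgsmooth : ContDiff ℝ ∞ g := by
    rw [contDiff_iff_contDiffAt]
    intro x
    rcases lt_or_ge ((x n)^2) (((2:ℝ)^(-j))^2/(4*(d:ℝ))) with hx | hx
    · apply ContDiffAt.congr_of_eventuallyEq (contDiffAt_const (c := (0:ℂ)))
      filter_upwards [hU.mem_nhds hx] with ξ hξ
      have h0 : χ ξ = 0 := hχ0 (Or.inl (le_of_lt hξ))
      simp [hgdef, h0]
    · have hxn : x n ≠ 0 := by
        intro h0
        rw [h0] at hx
        simp only [ne_eq, OfNat.ofNat_ne_zero, not_false_eq_true, zero_pow] at hx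
        have hpos : (0:ℝ) < ((2:ℝ)^(-j))^2/(4*(d:ℝ)) := div_pos (by positivity) (by linarith)
        linarith
      have h1 : ContDiffAt ℝ ∞ (fun ξ : EuclideanSpace ℝ (Fin d) => (χ ξ : ℂ)) x :=
        Complex.ofRealCLM.contDiff.contDiffAt.comp x hχ.contDiffAt
      have hc : ContDiff ℝ ∞ (fun ξ : EuclideanSpace ℝ (Fin d) => ((ξ n : ℝ) : ℂ)) :=
        (Complex.ofRealCLM.comp (EuclideanSpace.proj (𝕜 := ℝ) n)).contDiff
      have h2 : ContDiffAt ℝ ∞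
          (fun ξ : EuclideanSpace ℝ (Fin d) => (2*(π:ℂ)*Complex.I*((ξ n : ℝ):ℂ))^(d+1)) x :=
        (contDiffAt_const.mul hc.contDiffAt).pow _
      exact h1.mul (h2.inv (hne hxn))
  have hgsuppc : HasCompactSupport g := by
    apply HasCompactSupport.intro (isCompact_closedBall (0:EuclideanSpace ℝ (Fin d)) ((2:ℝ)^(3-j)))
    intro x hx
    have hxS : x ∈ S := by
      apply Or.inr
      simp only [mem_setOf_eq]
      simp only [Metric.mem_closedBall, dist_zero_right, not_le] at hx
      linarith
    have h0 : χ x = 0 := hχ0 hxS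
    simp [hgdef, h0]
  have hg : Function.HasTemperateGrowth g := myTemperate hgsmooth hgsuppc
  -- construct θ
  set θhat : SchwartzMap (EuclideanSpace ℝ (Fin d)) ℂ :=
    SchwartzMap.bilinLeftCLM (ContinuousLinearMap.mul ℝ ℂ) hg
      (FourierTransform.fourierCLE ℝ (SchwartzMap (EuclideanSpace ℝ (Fin d)) ℂ) ψ) with hθhatdef
  have hθhat : ∀ ξ, θhat ξ = 𝓕 (⇑ψ) ξ * g ξ := fun ξ => rfl
  set θ : SchwartzMap (EuclideanSpace ℝ (Fin d)) ℂ :=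
    (FourierTransform.fourierCLE ℝ (SchwartzMap (EuclideanSpace ℝ (Fin d)) ℂ)).symm θhat with hθdef
  have h𝓕θ : 𝓕 (⇑θ) = ⇑θhat := by
    have h := (FourierTransform.fourierCLE ℝ (SchwartzMap (EuclideanSpace ℝ (Fin d)) ℂ)).apply_symm_apply θhat
    rw [← h, FourierTransform.fourierCLE_apply, SchwartzMap.fourier_coe]
  -- support facts
  have hsuppT : ∀ ξ, 𝓕 (⇑ψ) ξ ≠ 0 → ξ ∈ T := by
    intro ξ h
    by_cases h1 : ‖ξ‖^2 ≤ 2*(d:ℝ)*(ξ n)^2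
    · by_cases h2 : (2:ℝ)^(-j) ≤ ‖ξ‖
      · by_cases h3 : ‖ξ‖ ≤ (2:ℝ)^(2-j)
        · exact ⟨h1, h2, h3⟩
        · exact absurd (hsupp ξ (Or.inr (Or.inr (lt_of_not_ge h3)))) h
      · exact absurd (hsupp ξ (Or.inr (Or.inl (lt_of_not_ge h2)))) h
    · exact absurd (hsupp ξ (Or.inl (le_of_lt (lt_of_not_ge h1)))) h
  have hTn : ∀ ξ ∈ T, ξ n ≠ 0 := by
    rintro ξ ⟨ha, hb, -⟩ h0
    rw [h0] at ha
    simp only [ne_eq, OfNat.ofNat_ne_zero, not_false_eq_true, zero_pow, mul_zero] at ha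
    nlinarith [hrpos]
  have hgne : ∀ ξ, 𝓕 (⇑ψ) ξ ≠ 0 → g ξ ≠ 0 := by
    intro ξ h
    have hξT := hsuppT ξ h
    have h1 : χ ξ = 1 := hχ1 hξT
    simp only [hgdef, h1, Complex.ofReal_one, one_mul]
    exact inv_ne_zero (hne (hTn ξ hξT))
  have hkey : ∀ ξ, (2*(π:ℂ)*Complex.I*((ξ n : ℝ):ℂ))^(d+1) * θhat ξ = 𝓕 (⇑ψ) ξ := by
    intro ξ
    rw [hθhat]
    by_cases h : 𝓕 (⇑ψ) ξ = 0
    · simp [h]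
    · have hξT := hsuppT ξ h
      have h1 : χ ξ = 1 := hχ1 hξT
      have hxn := hTn ξ hξT
      simp only [hgdef, h1, Complex.ofReal_one, one_mul]
      rw [mul_comm (𝓕 (⇑ψ) ξ) _, ← mul_assoc, mul_inv_cancel₀ (hne hxn), one_mul]
  -- derivative iteration
  set e : EuclideanSpace ℝ (Fin d) := EuclideanSpace.single n 1 with hedef
  have hinner : ∀ ξ : EuclideanSpace ℝ (Fin d), (inner ℝ ξ e : ℝ) = ξ n := by
    intro ξ
    simp [hedef, EuclideanSpace.inner_single_right]
  have hA : ∀ (k : ℕ) (f : SchwartzMap (EuclideanSpace ℝ (Fin d)) ℂ),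
      (partialDeriv n)^[k] ⇑f = ⇑((pderivCLM ℝ e)^[k] f) := by
    intro k
    induction k with
    | zero => intro f; rfl
    | succ k ih =>
      intro f
      rw [Function.iterate_succ_apply', ih f, Function.iterate_succ_apply']
      funext x
      simp [partialDeriv, SchwartzMap.pderivCLM_apply, hedef]
  have hB : ∀ (k : ℕ) (f : SchwartzMap (EuclideanSpace ℝ (Fin d)) ℂ)
      (ξ : EuclideanSpace ℝ (Fin d)),
      𝓕 (⇑((pderivCLM ℝ e)^[k] f)) ξ = (2*(π:ℂ)*Complex.I*((ξ n : ℝ):ℂ))^k * 𝓕 (⇑f) ξ := by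
    intro k
    induction k with
    | zero => intro f ξ; simp
    | succ k ih =>
      intro f ξ
      rw [Function.iterate_succ_apply, ih (pderivCLM ℝ e f) ξ, myFourierPDeriv, hinner ξ,
        pow_succ]
      ring
  refine ⟨θ, ?_, ?_, ?_⟩
  · have h1 : 𝓕 (⇑((pderivCLM ℝ e)^[d+1] θ)) = 𝓕 (⇑ψ) := by
      funext ξ
      rw [hB (d+1) θ ξ, h𝓕θ, hkey ξ]
    have h2 : (pderivCLM ℝ e)^[d+1] θ = ψ := by
      apply (FourierTransform.fourierCLE ℝ (SchwartzMap (EuclideanSpace ℝ (Fin d)) ℂ)).injective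
      apply SchwartzMap.ext
      intro ξ
      have := congrFun h1 ξ
      simpa [FourierTransform.fourierCLE_apply, SchwartzMap.fourier_coe] using this
    rw [hA (d+1) θ, h2]
  · rw [h𝓕θ]
    ext ξ
    simp only [Function.mem_support, hθhat ξ]
    constructor
    · intro h hc
      exact h (by rw [hc, zero_mul])
    · intro h
      exact mul_ne_zero h (hgne ξ h)
  · intro ξ hnorm
    rw [h𝓕θ, hθhat ξ, hsupp ξ (Or.inr hnorm), zero_mul]
end
end

section
/- Geometric series summation over scales: let α > d, j ≤ 0, J ∈ 𝒟_j, and for each i ≤ j let B_i be a collection of pairwise disjoint cubes in 𝒟_i. Then Σ_{i≤j} ‖1_J Σ_{K∈B_i, K ⊄ 3J} ρ_K^{−α}‖_{L^1} ≤ C Σ_{i≤j} 2^{(α−d)(i−j)/2} 2^{jd} ≤ C 2^{jd}, with C depending only on d and α. -/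
noncomputable section

/-- The mollified distance associated to the dyadic cube `Q_{j,k}`. -/
def rhoD {d : ℕ} (j : ℤ) (k : Fin d → ℤ) (y : EuclideanSpace ℝ (Fin d)) : ℝ :=
  rho (dyadicCenter j k) ((2:ℝ)^j) y

open MeasureTheory
open scoped ENNReal

lemma rho_set_nonempty {d : ℕ} (c y : EuclideanSpace ℝ (Fin d)) {l : ℝ} (hl : 0 < l) :
    {r : ℝ | 1 < r ∧ y ∈ dilCube c l (2 * r - 1)}.Nonempty := by
  set S : ℝ := ∑ n, |y n - c n| with hS
  have hS0 : 0 ≤ S := Finset.sum_nonneg fun n _ => abs_nonneg _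
  refine ⟨2 + S / l, ?_, fun n => ?_⟩
  · have : 0 ≤ S / l := div_nonneg hS0 hl.le
    show (1:ℝ) < 2 + S / l
    linarith
  · have h1 : |y n - c n| ≤ S := Finset.single_le_sum (f := fun n => |y n - c n|)
      (fun m _ => abs_nonneg _) (Finset.mem_univ n)
    have h2 : (2 * (2 + S / l) - 1) * l / 2 = (3 * l + 2 * S) / 2 := by
      field_simp; ring
    rw [h2]; linarith

lemma rho_lb {d : ℕ} (c y : EuclideanSpace ℝ (Fin d)) {l : ℝ} (hl : 0 < l) {A : ℝ}
    (h : ∀ r : ℝ, 1 < r → (∀ n, |y n - c n| ≤ (2 * r - 1) * l / 2) → A ≤ r) :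
    A ≤ rho c l y :=
  le_csInf (rho_set_nonempty c y hl) fun r hr => h r hr.1 hr.2

lemma one_le_rho {d : ℕ} (c y : EuclideanSpace ℝ (Fin d)) {l : ℝ} (hl : 0 < l) :
    1 ≤ rho c l y :=
  rho_lb c y hl fun r hr _ => hr.le

lemma coord_le_rho {d : ℕ} (c y : EuclideanSpace ℝ (Fin d)) {l : ℝ} (hl : 0 < l) (n : Fin d) :
    1/2 + |y n - c n| / l ≤ rho c l y := by
  refine rho_lb c y hl fun r hr hmem => ?_
  have h1 := hmem n
  have h2 : |y n - c n| / l ≤ (2 * r - 1) / 2 := by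
    rw [div_le_div_iff₀ hl two_pos]; linarith
  linarith

lemma summable_shift {s : ℝ} (hs : 1 < s) :
    Summable (fun n : ℤ => (1 + |(n:ℝ)|) ^ (-s)) := by
  have hnat : Summable (fun n : ℕ => (1 + (n:ℝ)) ^ (-s)) := by
    have h := (Real.summable_nat_rpow (p := -s)).2 (by linarith)
    have := h.comp_injective Nat.succ_injective
    refine this.congr fun n => ?_
    simp [Function.comp, Nat.succ_eq_add_one]
    push_cast
    ring_nf
  refine Summable.of_nat_of_neg (hnat.congr fun n => by simp) (hnat.congr fun n => by simp)

lemma oneD_sum {s : ℝ} (hs : 1 < s) :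
    ∃ G : ℝ≥0∞, G ≠ ⊤ ∧ ∀ t : ℝ,
      ∑' m : ℤ, ENNReal.ofReal ((1/2 + |t - m|) ^ (-s)) ≤ G := by
  set C1 : ℝ≥0∞ := ∑' n : ℤ, ENNReal.ofReal ((1 + |(n:ℝ)|) ^ (-s)) with hC1
  have hC1fin : C1 ≠ ⊤ := by
    rw [hC1, ← ENNReal.ofReal_tsum_of_nonneg (fun n => Real.rpow_nonneg (by positivity) _)
      (summable_shift hs)]
    exact ENNReal.ofReal_ne_top
  refine ⟨ENNReal.ofReal ((4:ℝ) ^ s) * C1, ENNReal.mul_ne_top ENNReal.ofReal_ne_top hC1fin,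
    fun t => ?_⟩
  set m0 : ℤ := round t with hm0
  have key : ∀ m : ℤ, ENNReal.ofReal ((1/2 + |t - m|) ^ (-s)) ≤
      ENNReal.ofReal ((4:ℝ) ^ s) * ENNReal.ofReal ((1 + |((m - m0 : ℤ):ℝ)|) ^ (-s)) := by
    intro m
    rw [← ENNReal.ofReal_mul (by positivity)]
    apply ENNReal.ofReal_le_ofReal
    set a : ℝ := |((m - m0 : ℤ):ℝ)| with ha
    have ha0 : 0 ≤ a := abs_nonneg _
    have hround : |t - m0| ≤ 1/2 := abs_sub_round t
    have hlb : (1 + a)/4 ≤ 1/2 + |t - m| := by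
      rcases le_or_gt a 1 with h | h
      · have : (0:ℝ) ≤ |t - m| := abs_nonneg _
        linarith
      · have htm : a - 1/2 ≤ |t - m| := by
          have : a ≤ |t - m| + |t - m0| := by
            calc a = |(m:ℝ) - m0| := by rw [ha]; push_cast; rfl
            _ = |((m:ℝ) - t) + (t - m0)| := by ring_nf
            _ ≤ |(m:ℝ) - t| + |t - m0| := abs_add_le _ _
            _ = |t - m| + |t - m0| := by rw [abs_sub_comm]
          linarith
        linarith
    have hlbpos : (0:ℝ) < (1 + a)/4 := by linarith
    calc (1/2 + |t - m|) ^ (-s) ≤ ((1 + a)/4) ^ (-s) :=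
          Real.rpow_le_rpow_of_nonpos hlbpos hlb (by linarith)
    _ = (4:ℝ)^s * (1 + a) ^ (-s) := by
        rw [Real.div_rpow (by linarith) (by norm_num), Real.rpow_neg (by norm_num : (0:ℝ) ≤ 4),
          div_eq_mul_inv, inv_inv, mul_comm]
  calc ∑' m : ℤ, ENNReal.ofReal ((1/2 + |t - m|) ^ (-s))
      ≤ ∑' m : ℤ, ENNReal.ofReal ((4:ℝ) ^ s) * ENNReal.ofReal ((1 + |((m - m0 : ℤ):ℝ)|) ^ (-s)) :=
        ENNReal.tsum_le_tsum key
    _ = ENNReal.ofReal ((4:ℝ) ^ s) * ∑' m : ℤ, ENNReal.ofReal ((1 + |((m - m0 : ℤ):ℝ)|) ^ (-s)) :=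
        ENNReal.tsum_mul_left
    _ = ENNReal.ofReal ((4:ℝ) ^ s) * C1 := by
        congr 1
        rw [hC1]
        rw [← (Equiv.addRight m0).tsum_eq
          (fun m : ℤ => ENNReal.ofReal ((1 + |((m - m0 : ℤ):ℝ)|) ^ (-s)))]
        apply tsum_congr
        intro n
        congr 2
        simp [Equiv.addRight]

lemma tsum_pi_prod : ∀ (d : ℕ) (f : Fin d → ℤ → ℝ≥0∞),
    ∑' k : Fin d → ℤ, ∏ n, f n (k n) = ∏ n, ∑' m : ℤ, f n m := by
  intro d
  induction d with
  | zero =>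
    intro f
    simp only [Finset.univ_eq_empty, Finset.prod_empty]
    exact tsum_eq_single (fun n => 0) (fun b hb => absurd (funext fun n => n.elim0) hb) |>.trans rfl
  | succ d ih =>
    intro f
    rw [← (Fin.consEquiv fun _ : Fin (d+1) => ℤ).tsum_eq (fun k => ∏ n, f n (k n))]
    calc ∑' p : ℤ × (Fin d → ℤ), ∏ n, f n (((Fin.consEquiv fun _ : Fin (d+1) => ℤ) p) n)
        = ∑' (a : ℤ) (b : Fin d → ℤ), f 0 a * ∏ n : Fin d, f n.succ (b n) := by
          rw [ENNReal.tsum_prod (f := fun a b =>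
            ∏ n, f n (((Fin.consEquiv fun _ : Fin (d+1) => ℤ) (a, b)) n))]
          refine tsum_congr fun a => tsum_congr fun b => ?_
          rw [Fin.prod_univ_succ]
          simp [Fin.consEquiv]
      _ = (∑' a : ℤ, f 0 a) * ∏ n : Fin d, ∑' m : ℤ, f n.succ m := by
          rw [← ih (fun n m => f n.succ m)]
          simp_rw [ENNReal.tsum_mul_left]
          rw [ENNReal.tsum_mul_right]
      _ = ∏ n, ∑' m : ℤ, f n m := by rw [Fin.prod_univ_succ]

/-- Pointwise bound for a single cube term. -/
lemma pointwise_bound {d : ℕ} {α s θ : ℝ} (hs : 1 < s) (hθ : 0 < θ)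
    (hαs : α = θ + d * s) {j i : ℤ} (hij : i ≤ j)
    (kJ k : Fin d → ℤ) (x : EuclideanSpace ℝ (Fin d))
    (hx : x ∈ dyadicCube j kJ)
    (hk : ¬ dyadicCube i k ⊆ dilCube (dyadicCenter j kJ) ((2:ℝ)^j) 3) :
    ENNReal.ofReal ((rhoD i k x) ^ (-α)) ≤
      ENNReal.ofReal ((2:ℝ) ^ θ) * (ENNReal.ofReal ((2:ℝ) ^ (-θ))) ^ ((j - i).toNat) *
        ∏ n, ENNReal.ofReal ((1/2 + |x n / (2:ℝ)^i - 1/2 - k n|) ^ (-s)) := by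
  set A : ℝ := (2:ℝ)^i with hA
  set Bv : ℝ := (2:ℝ)^j with hB
  have hA0 : (0:ℝ) < A := zpow_pos two_pos i
  have hB0 : (0:ℝ) < Bv := zpow_pos two_pos j
  have hAB : A ≤ Bv := zpow_le_zpow_right₀ one_le_two hij
  set c : EuclideanSpace ℝ (Fin d) := dyadicCenter i k with hc
  set ρ : ℝ := rhoD i k x with hρ
  have hρ1 : 1 ≤ ρ := one_le_rho c x hA0
  have hρ0 : 0 < ρ := lt_of_lt_of_le one_pos hρ1
  -- coordinate description of b_n
  have hbeq : ∀ n, |x n - c n| / A = |x n / A - 1/2 - k n| := by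
    intro n
    rw [hc]
    have : x n - dyadicCenter i k n = A * (x n / A - 1/2 - k n) := by
      simp only [dyadicCenter, WithLp.ofLp_toLp, ← hA]
      field_simp
      ring
    rw [this, abs_mul, abs_of_pos hA0]
    field_simp
  have hb : ∀ n, 1/2 + |x n / A - 1/2 - k n| ≤ ρ := by
    intro n
    have := coord_le_rho c x hA0 n
    rw [hbeq n] at this
    exact this
  -- far coordinate
  have hfar : Bv / 2 ≤ ρ * A := by
    rw [Set.not_subset] at hk
    obtain ⟨z, hz, hz3⟩ := hk
    simp only [dilCube, Set.mem_setOf_eq, not_forall, not_le] at hz3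
    obtain ⟨m, hm⟩ := hz3
    have hzK : |z m - c m| ≤ A / 2 := by
      obtain ⟨h1, h2⟩ := hz m
      rw [hc]
      simp only [dyadicCenter, WithLp.ofLp_toLp, ← hA]
      rw [abs_le]
      constructor <;> nlinarith
    have hxJ : |x m - dyadicCenter j kJ m| ≤ Bv / 2 := by
      obtain ⟨h1, h2⟩ := hx m
      simp only [dyadicCenter, WithLp.ofLp_toLp, ← hB]
      rw [abs_le]
      constructor <;> nlinarith
    have htri : |z m - dyadicCenter j kJ m| ≤ |z m - c m| + |x m - c m| +
        |x m - dyadicCenter j kJ m| := by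
      calc |z m - dyadicCenter j kJ m|
          = |(z m - c m) + (-(x m - c m) + (x m - dyadicCenter j kJ m))| := by ring_nf
        _ ≤ |z m - c m| + |(-(x m - c m)) + (x m - dyadicCenter j kJ m)| := abs_add_le _ _
        _ ≤ |z m - c m| + (|(-(x m - c m))| + |x m - dyadicCenter j kJ m|) := by
            gcongr; exact abs_add_le _ _
        _ = |z m - c m| + |x m - c m| + |x m - dyadicCenter j kJ m| := by
            rw [abs_neg]; ring
    have hxc : Bv / 2 ≤ |x m - c m| := by
      nlinarith [hm, hzK, hxJ, htri]
    have := hb m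
    rw [← hbeq m] at this
    have h4 : |x m - c m| / A ≤ ρ := by
      have : (1:ℝ)/2 + |x m - c m| / A ≤ ρ := this
      have h5 : (0:ℝ) ≤ |x m - c m| / A := div_nonneg (abs_nonneg _) hA0.le
      linarith
    calc Bv / 2 ≤ |x m - c m| := hxc
      _ = (|x m - c m| / A) * A := by field_simp
      _ ≤ ρ * A := by gcongr
  -- now the rpow computation
  have hρA : (2:ℝ) ^ (j - 1 - i) ≤ ρ := by
    have heq : (2:ℝ) ^ (j - 1 - i) = Bv / 2 / A := by
      rw [hB, hA, zpow_sub₀ (two_ne_zero), zpow_sub₀ (two_ne_zero), zpow_one]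
    rw [heq, div_le_iff₀ hA0]
    linarith [hfar]
  set N : ℕ := (j - i).toNat with hN
  have hNcast : ((N:ℝ)) = (j:ℝ) - i := by
    rw [hN]
    have : ((j - i).toNat : ℤ) = j - i := Int.toNat_of_nonneg (by omega)
    exact_mod_cast congrArg (Int.cast : ℤ → ℝ) this
  -- real inequality
  have key : ρ ^ (-α) ≤ ((2:ℝ) ^ θ * ((2:ℝ) ^ (-θ)) ^ N) *
      ∏ n, (1/2 + |x n / A - 1/2 - k n|) ^ (-s) := by
    have hsplit : ρ ^ (-α) = ρ ^ (-θ) * ∏ _n : Fin d, ρ ^ (-s) := by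
      rw [Finset.prod_const, Finset.card_univ, Fintype.card_fin,
        ← Real.rpow_natCast (ρ ^ (-s)) d, ← Real.rpow_mul hρ0.le, ← Real.rpow_add hρ0]
      congr 1
      rw [hαs]; ring
    rw [hsplit]
    have h1 : ρ ^ (-θ) ≤ (2:ℝ) ^ θ * ((2:ℝ) ^ (-θ)) ^ N := by
      have hlhs : ρ ^ (-θ) ≤ ((2:ℝ) ^ (j - 1 - i)) ^ (-θ) :=
        Real.rpow_le_rpow_of_nonpos (zpow_pos two_pos _) hρA (by linarith)
      refine hlhs.trans_eq ?_
      rw [← Real.rpow_intCast (2:ℝ) (j - 1 - i), ← Real.rpow_natCast ((2:ℝ) ^ (-θ)) N,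
        ← Real.rpow_mul (by norm_num : (0:ℝ) ≤ 2), ← Real.rpow_mul (by norm_num : (0:ℝ) ≤ 2),
        ← Real.rpow_add two_pos]
      congr 1
      push_cast [hNcast]
      ring
    have h2 : ∏ _n : Fin d, ρ ^ (-s) ≤ ∏ n, (1/2 + |x n / A - 1/2 - k n|) ^ (-s) := by
      apply Finset.prod_le_prod
      · intro n _; positivity
      · intro n _
        exact Real.rpow_le_rpow_of_nonpos (by positivity) (hb n) (by linarith)
    have hnn : (0:ℝ) ≤ ∏ _n : Fin d, ρ ^ (-s) :=
      Finset.prod_nonneg fun n _ => Real.rpow_nonneg hρ0.le _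
    have hnn2 : (0:ℝ) ≤ (2:ℝ) ^ θ * ((2:ℝ) ^ (-θ)) ^ N := by positivity
    exact mul_le_mul h1 h2 hnn hnn2
  refine le_trans (ENNReal.ofReal_le_ofReal key) (le_of_eq ?_)
  rw [ENNReal.ofReal_mul (by positivity), ENNReal.ofReal_mul (by positivity),
    ENNReal.ofReal_pow (by positivity),
    ENNReal.ofReal_prod_of_nonneg (fun n _ => Real.rpow_nonneg (by positivity) _)]

lemma dyadicCube_eq {d : ℕ} (j : ℤ) (k : Fin d → ℤ) :
    dyadicCube j k = (MeasurableEquiv.toLp 2 (Fin d → ℝ)).symm ⁻¹'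
      (Set.univ.pi fun n => Set.Ico ((2:ℝ)^j * k n) ((2:ℝ)^j * (k n + 1))) := by
  ext y
  simp only [dyadicCube, Set.mem_setOf_eq, Set.mem_preimage, Set.mem_pi, Set.mem_univ,
    forall_true_left, Set.mem_Ico,
    MeasurableEquiv.coe_mk, Equiv.refl_apply]
  exact Iff.rfl

lemma measurableSet_dyadicCube {d : ℕ} (j : ℤ) (k : Fin d → ℤ) :
    MeasurableSet (dyadicCube j k) := by
  rw [dyadicCube_eq]
  exact (MeasurableEquiv.toLp 2 (Fin d → ℝ)).symm.measurable
    (MeasurableSet.univ_pi fun n => measurableSet_Ico)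

lemma volume_dyadicCube {d : ℕ} (j : ℤ) (k : Fin d → ℤ) :
    volume (dyadicCube j k) = (ENNReal.ofReal ((2:ℝ)^j))^d := by
  rw [dyadicCube_eq,
    (EuclideanSpace.volume_preserving_symm_measurableEquiv_toLp (Fin d)).measure_preimage
      (MeasurableSet.univ_pi fun n => measurableSet_Ico).nullMeasurableSet,
    volume_pi_pi]
  have : ∀ n : Fin d, volume (Set.Ico ((2:ℝ)^j * k n) ((2:ℝ)^j * (k n + 1)))
      = ENNReal.ofReal ((2:ℝ)^j) := by
    intro n
    rw [Real.volume_Ico]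
    congr 1
    ring
  simp_rw [this]
  rw [Finset.prod_const, Finset.card_univ, Fintype.card_fin]

def scaleEquiv (j : ℤ) : ℕ ≃ {i : ℤ // i ≤ j} where
  toFun n := ⟨j - n, by omega⟩
  invFun i := (j - i.1).toNat
  left_inv n := by simp
  right_inv i := by
    ext
    simp only
    omega


/-- Geometric series summation over scales: for `α > d`, `j ≤ 0`, `J ∈ 𝒟_j` and
collections `B_i ⊆ 𝒟_i`,
`Σ_{i≤j} ‖1_J Σ_{K∈B_i, K ⊄ 3J} ρ_K^{−α}‖_{L^1} ≤ C 2^{jd}` with `C = C(d,α)`. -/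
theorem geometric_scale_summation (d : ℕ) (hd : 1 ≤ d) (α : ℝ) (hα : (d:ℝ) < α) :
    ∃ C > (0:ℝ), ∀ (j : ℤ), j ≤ 0 → ∀ (kJ : Fin d → ℤ) (B : ℤ → Set (Fin d → ℤ)),
      ∑' i : {i : ℤ // i ≤ j},
        ∫⁻ x in dyadicCube j kJ,
          ∑' k : {k : Fin d → ℤ // k ∈ B i.1 ∧
              ¬ dyadicCube (i.1) k ⊆ dilCube (dyadicCenter j kJ) ((2:ℝ)^j) 3},
            ENNReal.ofReal ((rhoD i.1 k.1 x) ^ (-α)) ≤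
        ENNReal.ofReal (C * 2 ^ ((j:ℤ) * d)) := by
  have hd0 : (0:ℝ) < d := by exact_mod_cast Nat.lt_of_lt_of_le Nat.zero_lt_one hd
  set s : ℝ := (α / d + 1) / 2 with hs_def
  have hαd : 1 < α / d := (one_lt_div hd0).2 hα
  have hs : 1 < s := by rw [hs_def]; linarith
  set θ : ℝ := (α - d) / 2 with hθ_def
  have hθ : 0 < θ := by rw [hθ_def]; linarith
  have hαs : α = θ + d * s := by
    rw [hθ_def, hs_def]
    field_simp
    ring
  obtain ⟨G, hGfin, hG⟩ := oneD_sum hs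
  set W : ℝ≥0∞ := ENNReal.ofReal ((2:ℝ) ^ (-θ)) with hW
  have hW1 : W < 1 := ENNReal.ofReal_lt_one.2
    (Real.rpow_lt_one_of_one_lt_of_neg one_lt_two (by linarith))
  set Cθ : ℝ≥0∞ := ENNReal.ofReal ((2:ℝ) ^ θ) with hCθ
  set Total : ℝ≥0∞ := Cθ * G ^ d * (1 - W)⁻¹ with hTotal
  have hTfin : Total ≠ ⊤ := by
    refine ENNReal.mul_ne_top (ENNReal.mul_ne_top ENNReal.ofReal_ne_top
      (ENNReal.pow_ne_top hGfin)) ?_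
    rw [ENNReal.inv_ne_top]
    simp [tsub_eq_zero_iff_le, not_le, hW1]
  have hT0 : (0:ℝ) < Total.toReal + 1 := by positivity
  refine ⟨Total.toReal + 1, hT0, fun j hj kJ B => ?_⟩
  set V : ℝ≥0∞ := ENNReal.ofReal ((2:ℝ) ^ j) with hV
  -- per-scale bound
  have hscale : ∀ i : {i : ℤ // i ≤ j},
      (∫⁻ x in dyadicCube j kJ,
        ∑' k : {k : Fin d → ℤ // k ∈ B i.1 ∧
            ¬ dyadicCube (i.1) k ⊆ dilCube (dyadicCenter j kJ) ((2:ℝ)^j) 3},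
          ENNReal.ofReal ((rhoD i.1 k.1 x) ^ (-α)))
        ≤ (Cθ * W ^ ((j - i.1).toNat) * G ^ d) * V ^ d := by
    intro i
    set N : ℕ := (j - i.1).toNat with hN
    have hpt : ∀ x ∈ dyadicCube j kJ,
        (∑' k : {k : Fin d → ℤ // k ∈ B i.1 ∧
            ¬ dyadicCube (i.1) k ⊆ dilCube (dyadicCenter j kJ) ((2:ℝ)^j) 3},
          ENNReal.ofReal ((rhoD i.1 k.1 x) ^ (-α))) ≤ Cθ * W ^ N * G ^ d := by
      intro x hx
      set f : Fin d → ℤ → ℝ≥0∞ :=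
        fun n m => ENNReal.ofReal ((1/2 + |x n / (2:ℝ)^(i.1) - 1/2 - m|) ^ (-s)) with hf
      set S : Set (Fin d → ℤ) := {k | k ∈ B i.1 ∧
        ¬ dyadicCube (i.1) k ⊆ dilCube (dyadicCenter j kJ) ((2:ℝ)^j) 3} with hSdef
      calc ∑' k : S, ENNReal.ofReal ((rhoD i.1 k.1 x) ^ (-α))
          ≤ ∑' k : S, Cθ * W ^ N * ∏ n, f n (k.1 n) := by
            refine ENNReal.tsum_le_tsum fun k => ?_
            exact pointwise_bound hs hθ hαs i.2 kJ k.1 x hx k.2.2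
        _ = Cθ * W ^ N * ∑' k : S, ∏ n, f n (k.1 n) := ENNReal.tsum_mul_left
        _ ≤ Cθ * W ^ N * ∑' k : Fin d → ℤ, ∏ n, f n (k n) := by
            gcongr
            rw [tsum_subtype S (fun k => ∏ n, f n (k n))]
            exact ENNReal.tsum_le_tsum fun k => Set.indicator_le_self _ _ _
        _ = Cθ * W ^ N * ∏ n, ∑' m : ℤ, f n m := by rw [tsum_pi_prod]
        _ ≤ Cθ * W ^ N * ∏ _n : Fin d, G :=
            mul_le_mul_right (Finset.prod_le_prod' fun n _ => hG (x n / (2:ℝ)^(i.1) - 1/2)) _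
        _ = Cθ * W ^ N * G ^ d := by
            rw [Finset.prod_const, Finset.card_univ, Fintype.card_fin]
    calc (∫⁻ x in dyadicCube j kJ,
          ∑' k : {k : Fin d → ℤ // k ∈ B i.1 ∧
              ¬ dyadicCube (i.1) k ⊆ dilCube (dyadicCenter j kJ) ((2:ℝ)^j) 3},
            ENNReal.ofReal ((rhoD i.1 k.1 x) ^ (-α)))
        ≤ ∫⁻ _x in dyadicCube j kJ, Cθ * W ^ N * G ^ d :=
          setLIntegral_mono measurable_const hpt
      _ = (Cθ * W ^ N * G ^ d) * volume (dyadicCube j kJ) := setLIntegral_const _ _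
      _ = (Cθ * W ^ N * G ^ d) * V ^ d := by rw [volume_dyadicCube]
  -- sum over scales
  calc ∑' i : {i : ℤ // i ≤ j},
        (∫⁻ x in dyadicCube j kJ,
          ∑' k : {k : Fin d → ℤ // k ∈ B i.1 ∧
              ¬ dyadicCube (i.1) k ⊆ dilCube (dyadicCenter j kJ) ((2:ℝ)^j) 3},
            ENNReal.ofReal ((rhoD i.1 k.1 x) ^ (-α)))
      ≤ ∑' i : {i : ℤ // i ≤ j}, (Cθ * W ^ ((j - i.1).toNat) * G ^ d) * V ^ d :=
        ENNReal.tsum_le_tsum hscale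
    _ = ∑' n : ℕ, (Cθ * W ^ n * G ^ d) * V ^ d := by
        rw [← (scaleEquiv j).tsum_eq (fun i : {i : ℤ // i ≤ j} =>
          (Cθ * W ^ ((j - i.1).toNat) * G ^ d) * V ^ d)]
        refine tsum_congr fun n => ?_
        have : (j - ((scaleEquiv j) n).1).toNat = n := by
          simp only [scaleEquiv, Equiv.coe_fn_mk]
          omega
        rw [this]
    _ = (Cθ * G ^ d * V ^ d) * ∑' n : ℕ, W ^ n := by
        rw [← ENNReal.tsum_mul_left]
        refine tsum_congr fun n => by ring
    _ = Total * V ^ d := by rw [ENNReal.tsum_geometric, hTotal]; ring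
    _ ≤ ENNReal.ofReal ((Total.toReal + 1) * 2 ^ ((j:ℤ) * d)) := by
        have hVd : V ^ d = ENNReal.ofReal ((2:ℝ) ^ ((j:ℤ) * d)) := by
          rw [hV, ← ENNReal.ofReal_pow (by positivity)]
          congr 1
          rw [zpow_mul, zpow_natCast]
        rw [hVd, ENNReal.ofReal_mul hT0.le]
        refine mul_le_mul_left ?_ _
        calc Total = ENNReal.ofReal Total.toReal := (ENNReal.ofReal_toReal hTfin).symm
          _ ≤ ENNReal.ofReal (Total.toReal + 1) := ENNReal.ofReal_le_ofReal (by linarith)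
end
end
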